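/- Let P be a finite set with |P| = 4 and let labels B₁,...,B₄ on subsets be induced by upward-closed predicates A₁,A₂,A₃ as before. For each i with 2 ≤ i ≤ 4, the signed sum of maximal chains of label pattern (B₄,...,Bᵢ,Bᵢ,B_{i−1},...,B₁) equals minus the signed sum of maximal chains of label pattern (B₄,...,Bᵢ,B_{i−1},B_{i−1},...,B₁) (one repetition moved one step), where signs are the signs of the corresponding permutations. -/
import Mathlib


open scoped Classical

/-- `p` has label `Bⱼ` if it satisfies `A_j, …, A_3` and fails `A_1, …, A_{j-1}`
(here `A k` denotes `A_{k+1}` for `k : Fin 3`). -/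
def hasLabel {α : Type*} (A : Fin 3 → Finset α → Prop) (p : Finset α) (j : ℕ) : Prop :=
  (∀ k : Fin 3, j ≤ (k : ℕ) + 1 → A k p) ∧ (∀ k : Fin 3, (k : ℕ) + 1 < j → ¬A k p)

/-- The vertex of size `k` of the maximal chain in the Boolean lattice of `Fin 4`
corresponding to the permutation `σ`: the set `{σ 0, …, σ (k-1)}`. -/
def chainVertex (σ : Equiv.Perm (Fin 4)) (k : ℕ) : Finset (Fin 4) :=
  (Finset.univ.filter fun i : Fin 4 => (i : ℕ) < k).image σ

/-- The signed sum over maximal chains in the Boolean lattice of `Fin 4` whose vertex of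
size `k` carries the label prescribed by the pattern `L`. -/
noncomputable def signedChainSum (A : Fin 3 → Finset (Fin 4) → Prop) (L : ℕ → ℕ) : ℤ :=
  ∑ σ : Equiv.Perm (Fin 4),
    if ∀ k : Fin 5, hasLabel A (chainVertex σ (k : ℕ)) (L (k : ℕ)) then
      (Equiv.Perm.sign σ : ℤ) else 0

/-- The descending label pattern `(B₄, …, Bᵢ, Bᵢ, B_{i-1}, …, B₁)` with the single
repetition at value `i`: the vertex of size `k` is labeled `4 - k` before the repeat and
`5 - k` after it. -/
def patternRep (i k : ℕ) : ℕ := if k ≤ 4 - i then 4 - k else 5 - k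

/-- Two distinct labels `i` and `i-1` cannot both hold. -/
lemma label_unique (A : Fin 3 → Finset (Fin 4) → Prop) {p : Finset (Fin 4)} {i : ℕ}
    (hi2 : 2 ≤ i) (hi4 : i ≤ 4) (h1 : hasLabel A p i) (h2 : hasLabel A p (i - 1)) : False := by
  exact h1.2 ⟨i - 2, by omega⟩ (by simp; omega) (h2.1 ⟨i - 2, by omega⟩ (by simp; omega))

/-- Monotonicity of `chainVertex` in the size. -/
lemma chainVertex_mono (σ : Equiv.Perm (Fin 4)) {k l : ℕ} (h : k ≤ l) :
    chainVertex σ k ⊆ chainVertex σ l := by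
  apply Finset.image_subset_image
  intro x hx
  simp only [Finset.mem_filter, Finset.mem_univ, true_and] at hx ⊢
  omega

/-- The middle-vertex dichotomy: if `p ⊆ r ⊆ q` with `p` labeled `Bᵢ` and `q` labeled
`B_{i-1}`, then `r` is labeled `Bᵢ` or `B_{i-1}`. -/
lemma mid_label (A : Fin 3 → Finset (Fin 4) → Prop)
    (hmono : ∀ (k : Fin 3) (p q : Finset (Fin 4)), p ⊆ q → A k p → A k q)
    {i : ℕ} (hi2 : 2 ≤ i) (hi4 : i ≤ 4)
    {p r q : Finset (Fin 4)} (hpr : p ⊆ r) (hrq : r ⊆ q)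
    (hp : hasLabel A p i) (hq : hasLabel A q (i - 1)) :
    hasLabel A r i ∨ hasLabel A r (i - 1) := by
  obtain ⟨hp1, _⟩ := hp
  obtain ⟨_, hq2⟩ := hq
  by_cases h : A ⟨i - 2, by omega⟩ r
  · right
    constructor
    · intro k hk
      by_cases hki : i ≤ (k : ℕ) + 1
      · exact hmono k p r hpr (hp1 k hki)
      · have hkv : k = ⟨i - 2, by omega⟩ := Fin.ext (by simp; omega)
        rw [hkv]; exact h
    · intro k hk hA
      exact hq2 k hk (hmono k r q hrq hA)
  · left
    constructor
    · exact fun k hk => hmono k p r hpr (hp1 k hk)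
    · intro k hk hA
      by_cases hki : (k : ℕ) + 1 < i - 1
      · exact hq2 k hki (hmono k r q hrq hA)
      · have hkv : k = ⟨i - 2, by omega⟩ := Fin.ext (by simp; omega)
        rw [hkv] at hA; exact h hA

/-- The two patterns agree away from position `5 - i`. -/
lemma pattern_agree {i : ℕ} (hi2 : 2 ≤ i) (hi4 : i ≤ 4) {k : ℕ} (hk : k ≠ 5 - i) :
    patternRep i k = patternRep (i - 1) k := by
  unfold patternRep
  split <;> split <;> omega

/-- Swapping positions `4-i` and `5-i` does not change the chain vertices of size `≠ 5-i`. -/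
lemma chainVertex_swap (σ : Equiv.Perm (Fin 4)) {i : ℕ} (hi2 : 2 ≤ i) (hi4 : i ≤ 4)
    {k : ℕ} (hk : k ≠ 5 - i) :
    chainVertex (σ * Equiv.swap (⟨4 - i, by omega⟩ : Fin 4) ⟨5 - i, by omega⟩) k
      = chainVertex σ k := by
  set a : Fin 4 := ⟨4 - i, by omega⟩
  set b : Fin 4 := ⟨5 - i, by omega⟩
  have hT : (Finset.univ.filter fun x : Fin 4 => (x : ℕ) < k).image (Equiv.swap a b)
      = Finset.univ.filter fun x : Fin 4 => (x : ℕ) < k := by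
    ext x
    simp only [Finset.mem_image, Finset.mem_filter, Finset.mem_univ, true_and]
    have hx : ∀ y : Fin 4, ((Equiv.swap a b y : Fin 4) : ℕ) < k ↔ (y : ℕ) < k := by
      intro y
      rcases eq_or_ne y a with rfl | hya
      · rw [Equiv.swap_apply_left]
        show ((b : Fin 4) : ℕ) < k ↔ ((a : Fin 4) : ℕ) < k
        simp only [a, b]; omega
      rcases eq_or_ne y b with rfl | hyb
      · rw [Equiv.swap_apply_right]
        show ((a : Fin 4) : ℕ) < k ↔ ((b : Fin 4) : ℕ) < k
        simp only [a, b]; omega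
      · rw [Equiv.swap_apply_of_ne_of_ne hya hyb]
    constructor
    · rintro ⟨y, hy, rfl⟩
      exact (hx y).2 hy
    · intro hxk
      refine ⟨Equiv.swap a b x, ?_, ?_⟩
      · rw [hx]; exact hxk
      · simp [Equiv.swap_apply_self]
  unfold chainVertex
  rw [show ⇑(σ * Equiv.swap a b) = ⇑σ ∘ ⇑(Equiv.swap a b) from rfl,
    ← Finset.image_image, hT]

/-- Transfer lemma: if the chain of `σ` matches pattern `i` or `i-1`, so does the
chain of `σ * swap`. -/
lemma transfer (A : Fin 3 → Finset (Fin 4) → Prop)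
    (hmono : ∀ (k : Fin 3) (p q : Finset (Fin 4)), p ⊆ q → A k p → A k q)
    {i : ℕ} (hi2 : 2 ≤ i) (hi4 : i ≤ 4) (σ : Equiv.Perm (Fin 4))
    (h : (∀ k : Fin 5, hasLabel A (chainVertex σ (k : ℕ)) (patternRep i (k : ℕ))) ∨
         (∀ k : Fin 5, hasLabel A (chainVertex σ (k : ℕ)) (patternRep (i - 1) (k : ℕ)))) :
    (∀ k : Fin 5, hasLabel A
        (chainVertex (σ * Equiv.swap (⟨4 - i, by omega⟩ : Fin 4) ⟨5 - i, by omega⟩) (k : ℕ))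
        (patternRep i (k : ℕ))) ∨
    (∀ k : Fin 5, hasLabel A
        (chainVertex (σ * Equiv.swap (⟨4 - i, by omega⟩ : Fin 4) ⟨5 - i, by omega⟩) (k : ℕ))
        (patternRep (i - 1) (k : ℕ))) := by
  set σ' := σ * Equiv.swap (⟨4 - i, by omega⟩ : Fin 4) ⟨5 - i, by omega⟩ with hσ'
  have hcommon : ∀ k : Fin 5, (k : ℕ) ≠ 5 - i →
      hasLabel A (chainVertex σ (k : ℕ)) (patternRep i (k : ℕ)) := by
    intro k hk
    rcases h with h | h
    · exact h k
    · rw [pattern_agree hi2 hi4 hk]; exact h k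
  have hp : hasLabel A (chainVertex σ (4 - i)) i := by
    have := hcommon ⟨4 - i, by omega⟩ (by simp; omega)
    simpa [patternRep, show (4 : ℕ) - (4 - i) = i by omega] using this
  have hq : hasLabel A (chainVertex σ (6 - i)) (i - 1) := by
    have := hcommon ⟨6 - i, by omega⟩ (by simp; omega)
    have hpat : patternRep i (6 - i) = i - 1 := by
      unfold patternRep; split <;> omega
    simpa [hpat] using this
  have heqlo : chainVertex σ' (4 - i) = chainVertex σ (4 - i) :=
    chainVertex_swap σ hi2 hi4 (by omega)
  have heqhi : chainVertex σ' (6 - i) = chainVertex σ (6 - i) :=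
    chainVertex_swap σ hi2 hi4 (by omega)
  have hpr : chainVertex σ (4 - i) ⊆ chainVertex σ' (5 - i) := by
    rw [← heqlo]; exact chainVertex_mono σ' (by omega)
  have hrq : chainVertex σ' (5 - i) ⊆ chainVertex σ (6 - i) := by
    rw [← heqhi]; exact chainVertex_mono σ' (by omega)
  have hmid := mid_label A hmono hi2 hi4 hpr hrq hp hq
  rcases hmid with hmid | hmid
  · left
    intro k
    rcases eq_or_ne (k : ℕ) (5 - i) with hk | hk
    · rw [hk]
      have hpat : patternRep i (5 - i) = i := by
        unfold patternRep; split <;> omega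
      rw [hpat]; exact hmid
    · rw [chainVertex_swap σ hi2 hi4 hk]
      exact hcommon k hk
  · right
    intro k
    rcases eq_or_ne (k : ℕ) (5 - i) with hk | hk
    · rw [hk]
      have hpat : patternRep (i - 1) (5 - i) = i - 1 := by
        unfold patternRep; split <;> omega
      rw [hpat]; exact hmid
    · rw [chainVertex_swap σ hi2 hi4 hk, ← pattern_agree hi2 hi4 hk]
      exact hcommon k hk

/-- (Speyer's cube path lemma, induction step) For `2 ≤ i ≤ 4`, the signed sum of
maximal chains with label pattern `(B₄,…,Bᵢ,Bᵢ,B_{i−1},…,B₁)` equals minus the signed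
sum of maximal chains with label pattern `(B₄,…,Bᵢ,B_{i−1},B_{i−1},…,B₁)`. -/
theorem speyer_cube_exchange (A : Fin 3 → Finset (Fin 4) → Prop)
    (hmono : ∀ (k : Fin 3) (p q : Finset (Fin 4)), p ⊆ q → A k p → A k q)
    (i : ℕ) (hi2 : 2 ≤ i) (hi4 : i ≤ 4) :
    signedChainSum A (patternRep i) = -signedChainSum A (patternRep (i - 1)) := by
  set a : Fin 4 := ⟨4 - i, by omega⟩
  set b : Fin 4 := ⟨5 - i, by omega⟩
  have hab : a ≠ b := by
    intro h
    have := congrArg Fin.val h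
    simp only [a, b] at this; omega
  set s : Equiv.Perm (Fin 4) := Equiv.swap a b with hs
  rw [eq_neg_iff_add_eq_zero, signedChainSum, signedChainSum, ← Finset.sum_add_distrib]
  set P : Equiv.Perm (Fin 4) → Prop := fun σ =>
    ∀ k : Fin 5, hasLabel A (chainVertex σ (k : ℕ)) (patternRep i (k : ℕ)) with hP
  set Q : Equiv.Perm (Fin 4) → Prop := fun σ =>
    ∀ k : Fin 5, hasLabel A (chainVertex σ (k : ℕ)) (patternRep (i - 1) (k : ℕ)) with hQ
  have hexc : ∀ σ, P σ → Q σ → False := by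
    intro σ hPσ hQσ
    have h1 := hPσ ⟨5 - i, by omega⟩
    have h2 := hQσ ⟨5 - i, by omega⟩
    have hpat1 : patternRep i (((⟨5 - i, by omega⟩ : Fin 5)) : ℕ) = i := by
      show patternRep i (5 - i) = i
      unfold patternRep; split <;> omega
    have hpat2 : patternRep (i - 1) (((⟨5 - i, by omega⟩ : Fin 5)) : ℕ) = i - 1 := by
      show patternRep (i - 1) (5 - i) = i - 1
      unfold patternRep; split <;> omega
    rw [hpat1] at h1
    rw [hpat2] at h2
    exact label_unique A hi2 hi4 h1 h2
  have htr : ∀ σ, (P σ ∨ Q σ) → (P (σ * s) ∨ Q (σ * s)) := by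
    intro σ hσ
    exact transfer A hmono hi2 hi4 σ hσ
  have hinv : ∀ σ : Equiv.Perm (Fin 4), σ * s * s = σ := by
    intro σ
    rw [mul_assoc, Equiv.swap_mul_self, mul_one]
  have hsign : ∀ σ : Equiv.Perm (Fin 4),
      (Equiv.Perm.sign (σ * s) : ℤ) = -(Equiv.Perm.sign σ : ℤ) := by
    intro σ
    rw [map_mul, hs, Equiv.Perm.sign_swap hab]
    simp
  apply Finset.sum_ninvolution (fun σ => σ * s)
  · intro σ
    by_cases h : P σ ∨ Q σ
    · have h' : P (σ * s) ∨ Q (σ * s) := htr σ h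
      have e1 : ((if P σ then (Equiv.Perm.sign σ : ℤ) else 0) +
          if Q σ then (Equiv.Perm.sign σ : ℤ) else 0) = (Equiv.Perm.sign σ : ℤ) := by
        rcases h with h | h
        · rw [if_pos h, if_neg (fun hq => hexc σ h hq), add_zero]
        · rw [if_neg (fun hp => hexc σ hp h), if_pos h, zero_add]
      have e2 : ((if P (σ * s) then (Equiv.Perm.sign (σ * s) : ℤ) else 0) +
          if Q (σ * s) then (Equiv.Perm.sign (σ * s) : ℤ) else 0)
          = (Equiv.Perm.sign (σ * s) : ℤ) := by
        rcases h' with h' | h'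
        · rw [if_pos h', if_neg (fun hq => hexc _ h' hq), add_zero]
        · rw [if_neg (fun hp => hexc _ hp h'), if_pos h', zero_add]
      rw [e1, e2, hsign]
      ring
    · push_neg at h
      have h' : ¬(P (σ * s) ∨ Q (σ * s)) := by
        intro hc
        have := htr (σ * s) hc
        rw [hinv] at this
        rcases this with hh | hh
        · exact h.1 hh
        · exact h.2 hh
      push_neg at h'
      rw [if_neg h.1, if_neg h.2, if_neg h'.1, if_neg h'.2]
      ring
  · intro σ _ hne
    exfalso
    apply hab
    have : σ (s a) = σ a := by rw [← Equiv.Perm.mul_apply, hne]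
    have h2 : s a = a := σ.injective this
    rw [hs, Equiv.swap_apply_left] at h2
    exact h2.symm
  · intro σ; exact Finset.mem_univ _
  · exact hinv
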